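/- Any two levels are comparable under membership: if s and t are levels, then s ∈ t or s = t or t ∈ s. -/

import Mathlib

def pot (a : ZFSet) : ZFSet :=
  ZFSet.sep (fun x => ∃ c ∈ a, x ⊆ c) (ZFSet.powerset (ZFSet.sUnion a))

def Potent (a : ZFSet) : Prop := ∀ x, (∃ c, x ⊆ c ∧ c ∈ a) → x ∈ a

def IsHistory (h : ZFSet) : Prop := ∀ x ∈ h, x = pot (x ∩ h)

def IsLevel (s : ZFSet) : Prop := ∃ h, IsHistory h ∧ s = pot h

/-! Levels are transitive, potent, and every member of a level lies below a level that is a member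
of it. Comparability then follows by a double `∈`-induction, as for von Neumann ordinals: if
neither `s ∈ t` nor `t ∈ s`, then every level `r ∈ s` is comparable with `t`, which forces `r ∈ t`
and hence `s ⊆ t` by potency; symmetrically `t ⊆ s`. -/

open ZFSet

theorem mem_pot {x a : ZFSet} : x ∈ pot a ↔ ∃ c ∈ a, x ⊆ c := by
  simp only [pot, mem_sep, mem_powerset, and_iff_right_iff_imp]
  rintro ⟨c, hc, hxc⟩ y hy
  exact mem_sUnion_of_mem (hxc hy) hc

theorem mem_pot_of_mem {a c : ZFSet} (hc : c ∈ a) : c ∈ pot a :=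
  mem_pot.2 ⟨c, hc, subset_rfl⟩

theorem potent_pot (a : ZFSet) : Potent (pot a) := by
  rintro x ⟨y, hxy, hy⟩
  obtain ⟨c, hc, hyc⟩ := mem_pot.1 hy
  exact mem_pot.2 ⟨c, hc, hxy.trans hyc⟩

namespace IsHistory

variable {h a : ZFSet}

theorem isTransitive_of_mem (hh : IsHistory h) (ha : a ∈ h) : a.IsTransitive := by
  induction a using ZFSet.inductionOn with
  | _ a ih =>
  intro y hy z hz
  rw [hh a ha, mem_pot] at hy ⊢
  obtain ⟨e, he, hye⟩ := hy
  rw [mem_inter] at he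
  exact ⟨e, mem_inter.2 he, (ih e he.1 he.2).subset_of_mem (hye hz)⟩

theorem inter_of_mem (hh : IsHistory h) (ha : a ∈ h) : IsHistory (a ∩ h) := by
  intro x hx
  rw [mem_inter] at hx
  have hxa : x ⊆ a := (hh.isTransitive_of_mem ha).subset_of_mem hx.1
  have : x ∩ (a ∩ h) = x ∩ h := ZFSet.ext fun z => by
    simp only [mem_inter]
    exact ⟨fun hz => ⟨hz.1, hz.2.2⟩, fun hz => ⟨hz.1, hxa hz.1, hz.2⟩⟩
  rw [this]
  exact hh x hx.2

theorem isLevel_of_mem (hh : IsHistory h) (ha : a ∈ h) : IsLevel a :=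
  ⟨a ∩ h, hh.inter_of_mem ha, hh a ha⟩

end IsHistory

namespace IsLevel

variable {s t x : ZFSet}

theorem potent (hs : IsLevel s) : Potent s := by
  obtain ⟨h, -, rfl⟩ := hs
  exact potent_pot h

theorem isTransitive (hs : IsLevel s) : s.IsTransitive := by
  obtain ⟨h, hh, rfl⟩ := hs
  intro y hy z hz
  obtain ⟨c, hc, hyc⟩ := mem_pot.1 hy
  exact mem_pot.2 ⟨c, hc, (hh.isTransitive_of_mem hc).subset_of_mem (hyc hz)⟩

theorem exists_isLevel_mem_subset (hs : IsLevel s) (hx : x ∈ s) :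
    ∃ r ∈ s, IsLevel r ∧ x ⊆ r := by
  obtain ⟨h, hh, rfl⟩ := hs
  obtain ⟨c, hc, hxc⟩ := mem_pot.1 hx
  exact ⟨c, mem_pot_of_mem hc, hh.isLevel_of_mem hc, hxc⟩

theorem subset_of_notMem (hs : IsLevel s) (ht : IsLevel t) (hts : t ∉ s)
    (hcmp : ∀ r ∈ s, IsLevel r → r ∈ t ∨ r = t ∨ t ∈ r) : s ⊆ t := by
  intro x hx
  obtain ⟨r, hrs, hr, hxr⟩ := hs.exists_isLevel_mem_subset hx
  rcases hcmp r hrs hr with hrt | rfl | htr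
  · exact ht.potent x ⟨r, hxr, hrt⟩
  · exact absurd hrs hts
  · exact absurd (hs.isTransitive.mem_trans htr hrs) hts

end IsLevel

theorem stmt6 (s t : ZFSet) (hs : IsLevel s) (ht : IsLevel t) :
    s ∈ t ∨ s = t ∨ t ∈ s := by
  induction s using ZFSet.inductionOn generalizing t with
  | _ s ihs =>
  induction t using ZFSet.inductionOn with
  | _ t iht =>
  by_contra! hcmp
  obtain ⟨hst, hne, hts⟩ := hcmp
  refine hne (ZFSet.ext fun z => ⟨fun hz => ?_, fun hz => ?_⟩)
  · exact hs.subset_of_notMem ht hts (fun r hr hrl => ihs r hr t hrl ht) hz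
  · refine ht.subset_of_notMem hs hst (fun u hu hul => ?_) hz
    rcases iht u hu hul with hsu | rfl | hus
    exacts [Or.inr (Or.inr hsu), Or.inr (Or.inl rfl), Or.inl hus]
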